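/- arXiv:2102.05776 — 2 statements merged into one kernel-verified Lean document; each statement's English description precedes it below -/
import Mathlib

section
/- Fix vectors ψ^{π†}, ψ^{π*}, ψ^{π_D}, {ψ^{π{s;a}}}_{(s,a)∈Θ} in ℝ^n and reward vectors R̄ = R̂ + Σ_{(s,a)∈Θ} α_{s,a}(ψ^{π{s;a}} - ψ^{π†}), α ≥ 0. Assume Γ^{s;a}(π_D) > Γ^{s;a}(π†) for all (s,a) ∈ Θ and that ζ := max_{(s,a)∈Θ} (Γ^{s;a}(π*) - Γ^{s;a}(π_D))/(Γ^{s;a}(π_D) - Γ^{s;a}(π†)) satisfies: for each (s,a) ∈ Θ, Γ^{s;a}(π*) - Γ^{s;a}(π_D) ≤ ζ·(Γ^{s;a}(π_D) - Γ^{s;a}(π†)). Then ⟨ψ^{π*} - ψ^{π_D}, R̄⟩ ≤ ⟨ψ^{π*} - ψ^{π_D}, R̂⟩ + ζ·⟨ψ^{π_D} - ψ^{π†}, R̄ - R̂⟩, where Γ^{s;a}(π) := ⟨ψ^{π{s;a}} - ψ^{π†}, ψ^π⟩. -/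
open scoped BigOperators

/-- Inner product on ℝ^n. -/
def dotv {n : ℕ} (x y : Fin n → ℝ) : ℝ := ∑ j, x j * y j

lemma dotv_comm {n : ℕ} (x y : Fin n → ℝ) : dotv x y = dotv y x := by
  unfold dotv; exact Finset.sum_congr rfl fun j _ => mul_comm _ _

lemma dotv_sub_right {n : ℕ} (x y z : Fin n → ℝ) :
    dotv x (y - z) = dotv x y - dotv x z := by
  unfold dotv
  rw [← Finset.sum_sub_distrib]
  exact Finset.sum_congr rfl fun j _ => by simp [mul_sub]

lemma dotv_smul_right {n : ℕ} (c : ℝ) (x y : Fin n → ℝ) :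
    dotv x (c • y) = c * dotv x y := by
  unfold dotv
  rw [Finset.mul_sum]
  exact Finset.sum_congr rfl fun j _ => by simp [Pi.smul_apply, smul_eq_mul]; ring

lemma dotv_sum_right {n : ℕ} {ι : Type} (s : Finset ι) (x : Fin n → ℝ)
    (f : ι → Fin n → ℝ) : dotv x (∑ i ∈ s, f i) = ∑ i ∈ s, dotv x (f i) := by
  unfold dotv
  rw [Finset.sum_comm]
  exact Finset.sum_congr rfl fun j _ => by simp [Finset.mul_sum]

/-- key linear-algebraic inequality behind Theorem 3:
`⟨ψ^{π*} - ψ^{π_D}, R̄⟩ ≤ ⟨ψ^{π*} - ψ^{π_D}, R̂⟩ + ζ·⟨ψ^{π_D} - ψ^{π†}, R̄ - R̂⟩`. -/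
theorem attack_influence_key_inequality {n : ℕ} {ι : Type} (Θ : Finset ι)
    (ψt ψD ψstar Rhat Rbar : Fin n → ℝ) (ψn : ι → Fin n → ℝ) (α : ι → ℝ) (ζ : ℝ)
    (hα : ∀ i ∈ Θ, 0 ≤ α i)
    (hR : Rbar = Rhat + ∑ i ∈ Θ, α i • (ψn i - ψt))
    (hΓlt : ∀ i ∈ Θ, dotv (ψn i - ψt) ψt < dotv (ψn i - ψt) ψD)
    (hζ : ∀ i ∈ Θ,
      dotv (ψn i - ψt) ψstar - dotv (ψn i - ψt) ψD
        ≤ ζ * (dotv (ψn i - ψt) ψD - dotv (ψn i - ψt) ψt)) :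
    dotv (ψstar - ψD) Rbar
      ≤ dotv (ψstar - ψD) Rhat + ζ * dotv (ψD - ψt) (Rbar - Rhat) := by
  have hd : Rbar - Rhat = ∑ i ∈ Θ, α i • (ψn i - ψt) := by
    rw [hR]; abel
  have key : ∀ (v : Fin n → ℝ), dotv v (Rbar - Rhat)
      = ∑ i ∈ Θ, α i * dotv (ψn i - ψt) v := by
    intro v
    rw [hd, dotv_sum_right]
    exact Finset.sum_congr rfl fun i _ => by
      rw [dotv_smul_right, dotv_comm]
  have h1 : dotv (ψstar - ψD) Rbar
      = dotv (ψstar - ψD) Rhat + ∑ i ∈ Θ, α i * dotv (ψn i - ψt) (ψstar - ψD) := by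
    have := key (ψstar - ψD)
    rw [dotv_sub_right] at this
    linarith
  rw [h1, key (ψD - ψt)]
  have hsum : ∑ i ∈ Θ, α i * dotv (ψn i - ψt) (ψstar - ψD)
      ≤ ζ * ∑ i ∈ Θ, α i * dotv (ψn i - ψt) (ψD - ψt) := by
    rw [Finset.mul_sum]
    apply Finset.sum_le_sum
    intro i hi
    have h2 := hζ i hi
    have h3 := hα i hi
    rw [dotv_sub_right, dotv_sub_right]
    nlinarith [mul_le_mul_of_nonneg_left h2 h3]
  linarith
end

section
/- If the attack parameter is underestimated, the defense degenerates to the target policy: if ε† > ε_D > 0 and R̂ = A(R̄, π†, ε†) (so ρ̂^{π†} ≥ ρ̂^{π{s;a}} + ε† for all neighbor policies), then the set {R : R̂ = A(R, π†, ε) for some 0 < ε ≤ ε_D} equals {R̂}, and consequently the solution of the robust defense problem max_π min over this set of ρ^π is the unique maximizer of ρ̂, namely π† itself. -/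
/-
Every constraint cutting out `C_ε` is affine in the reward, and `R̂` satisfies all of them with
the larger margin `ε† > ε`, so `R̂` lies in the interior of `C_ε`. A point of `C_ε` nearest to `R`
that lies in the interior of `C_ε` must be `R` itself, so `R̂ = A(R, π†, ε)` forces `R = R̂`.

For the second claim let `V` solve the Bellman equation of `π†` under `R̂`. The flow equation of
occupancy measures gives the performance difference lemma
`ρ̂^π = ρ̂^{π†} + Σ_{s,a} ψ^π(s,a) adv(s,a)`. For the neighbour `π†{s;a}` it reads
`ρ̂^{π†{s;a}} - ρ̂^{π†} = μ^{π†{s;a}}(s) adv(s,a)`, so by ergodicity the margin forces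
`adv(s,a) < 0` whenever `a ≠ π†(s)`, and every other policy puts positive occupancy on such a pair.
-/

open scoped BigOperators

structure MDP (S A : Type) [Fintype S] [Fintype A] where
  P : S → A → S → ℝ
  σ : S → ℝ
  γ : ℝ
  P_nonneg : ∀ s a s', 0 ≤ P s a s'
  P_sum : ∀ s a, ∑ s', P s a s' = 1
  σ_nonneg : ∀ s, 0 ≤ σ s
  σ_sum : ∑ s, σ s = 1
  γ_nonneg : 0 ≤ γ
  γ_lt_one : γ < 1

variable {S A : Type} [Fintype S] [Fintype A]

/-- A stochastic stationary policy: `π s a` is the probability of action `a` in state `s`. -/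
def isPolicy (π : S → A → ℝ) : Prop :=
  (∀ s a, 0 ≤ π s a) ∧ ∀ s, ∑ a, π s a = 1

/-- `saDist M π t s a` is the probability that `(s_{t+1}, a_{t+1}) = (s, a)`
(time indexed from 1 in the paper, from 0 here) under policy `π`. -/
def saDist (M : MDP S A) (π : S → A → ℝ) : ℕ → S → A → ℝ
  | 0 => fun s a => M.σ s * π s a
  | t + 1 => fun s a => (∑ s', ∑ a', saDist M π t s' a' * M.P s' a' s) * π s a

/-- Discounted state-action occupancy measure
`ψ^π(s,a) = E[(1-γ) Σ_{t≥1} γ^{t-1} 1{s_t=s, a_t=a}]`. -/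
noncomputable def occ (M : MDP S A) (π : S → A → ℝ) (s : S) (a : A) : ℝ :=
  (1 - M.γ) * ∑' t : ℕ, M.γ ^ t * saDist M π t s a

/-- Inner product of two `|S|·|A|`-dimensional vectors. -/
def dot (ψ R : S → A → ℝ) : ℝ := ∑ s, ∑ a, ψ s a * R s a

/-- The score `ρ^π = ⟨ψ^π, R⟩`. -/
noncomputable def score (M : MDP S A) (π : S → A → ℝ) (R : S → A → ℝ) : ℝ :=
  dot (occ M π) R

/-- `stDist M π t s` is the probability that `s_{t+1} = s`. -/
def stDist (M : MDP S A) (π : S → A → ℝ) : ℕ → S → ℝ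
  | 0 => M.σ
  | t + 1 => fun s => ∑ s', ∑ a', stDist M π t s' * π s' a' * M.P s' a' s

/-- Discounted state occupancy measure `μ^π(s) = E[(1-γ) Σ_{t≥1} γ^{t-1} 1{s_t=s}]`. -/
noncomputable def stateOcc (M : MDP S A) (π : S → A → ℝ) (s : S) : ℝ :=
  (1 - M.γ) * ∑' t : ℕ, M.γ ^ t * stDist M π t s

/-- The stochastic policy corresponding to a deterministic policy `d : S → A`. -/
def detPol [DecidableEq A] (d : S → A) : S → A → ℝ :=
  fun s a => if a = d s then 1 else 0

/-- The neighbor policy `π†{s;a}`, following `a ≠ π†(s)` in `s` and `π†` elsewhere. -/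
def neighbor [DecidableEq S] (πd : S → A) (s : S) (a : A) : S → A :=
  fun s' => if s' = s then a else πd s'

/-- Score of policy `π` for rewards given as Euclidean vectors over `S × A`. -/
noncomputable def scoreE (M : MDP S A) (π : S → A → ℝ)
    (R : EuclideanSpace ℝ (S × A)) : ℝ :=
  ∑ p : S × A, occ M π p.1 p.2 * R p

/-- Membership in the attack constraint set `C_ε`: π† beats every neighbor policy by
margin ε. -/
def inC [DecidableEq S] [DecidableEq A] (M : MDP S A) (πt : S → A) (ε : ℝ)
    (R : EuclideanSpace ℝ (S × A)) : Prop :=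
  ∀ s a, a ≠ πt s →
    scoreE M (detPol πt) R ≥ scoreE M (detPol (neighbor πt s a)) R + ε

/-- `isAttack M πt ε R' Rh` : `Rh = A(R', πt, ε)` is the Euclidean projection of
`R'` onto `C_ε`, i.e. the closest feasible reward to `R'`. -/
def isAttack [DecidableEq S] [DecidableEq A] (M : MDP S A) (πt : S → A) (ε : ℝ)
    (Rorig Rh : EuclideanSpace ℝ (S × A)) : Prop :=
  inC M πt ε Rh ∧ ∀ R₂, inC M πt ε R₂ → ‖Rh - Rorig‖ ≤ ‖R₂ - Rorig‖


set_option linter.unusedSectionVars false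

open Filter Topology Matrix

theorem eq_of_mem_interior_of_forall_norm_sub_le {E : Type*} [NormedAddCommGroup E]
    [NormedSpace ℝ E] {C : Set E} {x y : E} (hy : y ∈ interior C)
    (hmin : ∀ z ∈ C, ‖y - x‖ ≤ ‖z - x‖) : y = x := by
  have hseg : Tendsto (fun t : ℝ => y + t • (x - y)) (𝓝[>] 0) (𝓝 y) := by
    have : Continuous fun t : ℝ => y + t • (x - y) := by fun_prop
    simpa using (this.tendsto 0).mono_left nhdsWithin_le_nhds
  obtain ⟨t, hmem, ht⟩ := ((hseg.eventually (mem_interior_iff_mem_nhds.1 hy)).and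
    (Ioo_mem_nhdsGT zero_lt_one)).exists
  have hdist : y + t • (x - y) - x = (1 - t) • (y - x) := by module
  have hle := hmin _ hmem
  rw [hdist, norm_smul, Real.norm_of_nonneg (by linarith [ht.2])] at hle
  have : ‖y - x‖ ≤ 0 := by nlinarith [norm_nonneg (y - x), ht.1]
  exact sub_eq_zero.1 (norm_le_zero_iff.1 this)

theorem norm_mulVec_le_of_sum_le_one {ι : Type*} [Fintype ι] {Q : Matrix ι ι ℝ}
    (hQ : ∀ i j, 0 ≤ Q i j) (hQ1 : ∀ i, ∑ j, Q i j ≤ 1) (V : ι → ℝ) : ‖Q *ᵥ V‖ ≤ ‖V‖ := by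
  refine (pi_norm_le_iff_of_nonneg (norm_nonneg V)).2 fun i => ?_
  calc ‖(Q *ᵥ V) i‖ ≤ ∑ j, Q i j * ‖V‖ := by
        refine (norm_sum_le _ _).trans (Finset.sum_le_sum fun j _ => ?_)
        rw [norm_mul, Real.norm_of_nonneg (hQ i j)]
        exact mul_le_mul_of_nonneg_left (norm_le_pi_norm V j) (hQ i j)
    _ ≤ ‖V‖ := by
        rw [← Finset.sum_mul]
        exact mul_le_of_le_one_left (norm_nonneg V) (hQ1 i)

theorem exists_eq_add_smul_mulVec {ι : Type*} [Fintype ι] {Q : Matrix ι ι ℝ}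
    (hQ : ∀ i j, 0 ≤ Q i j) (hQ1 : ∀ i, ∑ j, Q i j ≤ 1) {γ : ℝ} (hγ : |γ| < 1) (r : ι → ℝ) :
    ∃ V, V = r + γ • Q *ᵥ V := by
  let L : (ι → ℝ) →ₗ[ℝ] ι → ℝ := LinearMap.id - γ • Q.mulVecLin
  have hinj : Function.Injective L := by
    refine (injective_iff_map_eq_zero L).2 fun V hV => norm_le_zero_iff.1 ?_
    have hfix : V = γ • Q *ᵥ V := sub_eq_zero.1 hV
    have : ‖V‖ ≤ |γ| * ‖V‖ := by
      calc ‖V‖ = |γ| * ‖Q *ᵥ V‖ := by rw [← Real.norm_eq_abs, ← norm_smul, ← hfix]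
        _ ≤ |γ| * ‖V‖ := by gcongr; exact norm_mulVec_le_of_sum_le_one hQ hQ1 V
    nlinarith [norm_nonneg V, abs_nonneg γ]
  obtain ⟨V, hV⟩ := LinearMap.injective_iff_surjective.1 hinj r
  exact ⟨V, by rw [← hV]; simp [L]⟩

section Occupancy

variable {M : MDP S A} {π : S → A → ℝ}

theorem isPolicy_detPol [DecidableEq A] (d : S → A) : isPolicy (detPol d) :=
  ⟨fun s a => by unfold detPol; positivity, fun s => by simp [detPol]⟩

theorem stDist_nonneg (hπ : isPolicy π) (t : ℕ) (s : S) : 0 ≤ stDist M π t s := by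
  induction t generalizing s with
  | zero => exact M.σ_nonneg s
  | succ t ih =>
    exact Finset.sum_nonneg fun s' _ => Finset.sum_nonneg fun a' _ =>
      mul_nonneg (mul_nonneg (ih s') (hπ.1 s' a')) (M.P_nonneg s' a' s)

theorem sum_stDist (hπ : isPolicy π) (t : ℕ) : ∑ s, stDist M π t s = 1 := by
  induction t with
  | zero => exact M.σ_sum
  | succ t ih =>
    calc ∑ s, stDist M π (t + 1) s
        = ∑ s', stDist M π t s' * ∑ a', π s' a' * ∑ s, M.P s' a' s := by
          simp only [stDist, Finset.mul_sum]
          rw [Finset.sum_comm]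
          refine Finset.sum_congr rfl fun s' _ => ?_
          rw [Finset.sum_comm]
          exact Finset.sum_congr rfl fun a' _ => Finset.sum_congr rfl fun s _ => by ring
      _ = 1 := by simp [M.P_sum, hπ.2, ih]

theorem stDist_le_one (hπ : isPolicy π) (t : ℕ) (s : S) : stDist M π t s ≤ 1 :=
  sum_stDist (M := M) hπ t ▸
    Finset.single_le_sum (fun s' _ => stDist_nonneg hπ t s') (Finset.mem_univ s)

theorem summable_stDist (hπ : isPolicy π) (s : S) :
    Summable fun t => M.γ ^ t * stDist M π t s :=
  (summable_geometric_of_lt_one M.γ_nonneg M.γ_lt_one).of_nonneg_of_le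
    (fun t => mul_nonneg (pow_nonneg M.γ_nonneg t) (stDist_nonneg hπ t s))
    (fun t => mul_le_of_le_one_right (pow_nonneg M.γ_nonneg t) (stDist_le_one hπ t s))

theorem saDist_eq_stDist_mul (t : ℕ) (s : S) (a : A) :
    saDist M π t s a = stDist M π t s * π s a := by
  induction t generalizing s a with
  | zero => rfl
  | succ t ih => simp only [saDist, stDist, ih, mul_assoc]

theorem occ_eq_stateOcc_mul (s : S) (a : A) : occ M π s a = stateOcc M π s * π s a := by
  simp only [occ, stateOcc, saDist_eq_stDist_mul, ← mul_assoc, tsum_mul_right]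

theorem sum_occ (hπ : isPolicy π) (s : S) : ∑ a, occ M π s a = stateOcc M π s := by
  simp [occ_eq_stateOcc_mul, ← Finset.mul_sum, hπ.2]

theorem occ_nonneg (hπ : isPolicy π) (s : S) (a : A) : 0 ≤ occ M π s a := by
  rw [occ_eq_stateOcc_mul]
  refine mul_nonneg (mul_nonneg (by linarith [M.γ_lt_one]) (tsum_nonneg fun t => ?_)) (hπ.1 s a)
  exact mul_nonneg (pow_nonneg M.γ_nonneg t) (stDist_nonneg hπ t s)

theorem stateOcc_eq (hπ : isPolicy π) (s' : S) :
    stateOcc M π s' = (1 - M.γ) * M.σ s' + M.γ * ∑ s, ∑ a, occ M π s a * M.P s a s' := by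
  have hstep : ∀ t, M.γ ^ (t + 1) * stDist M π (t + 1) s'
      = M.γ * ∑ s, ∑ a, (M.γ ^ t * stDist M π t s) * (π s a * M.P s a s') := by
    intro t
    simp only [stDist, Finset.mul_sum]
    exact Finset.sum_congr rfl fun s _ => Finset.sum_congr rfl fun a _ => by ring
  have hsum : ∀ s a, Summable fun t => (M.γ ^ t * stDist M π t s) * (π s a * M.P s a s') :=
    fun s a => (summable_stDist hπ s).mul_right _
  rw [stateOcc, (summable_stDist hπ s').tsum_eq_zero_add, tsum_congr hstep, tsum_mul_left,
    Summable.tsum_finsetSum fun s _ => summable_sum fun a _ => hsum s a]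
  simp only [Summable.tsum_finsetSum fun a _ => hsum _ a, tsum_mul_right, occ_eq_stateOcc_mul,
    stateOcc]
  simp only [stDist, pow_zero, one_mul, Finset.mul_sum, mul_add]
  congr 1
  exact Finset.sum_congr rfl fun s _ => Finset.sum_congr rfl fun a _ => by ring

theorem exists_pos_of_ne_detPol [DecidableEq A] {d : S → A} (hπ : isPolicy π)
    (hne : π ≠ detPol d) : ∃ s a, a ≠ d s ∧ 0 < π s a := by
  by_contra! hoff
  refine hne (funext fun s => funext fun a => ?_)
  have hzero : ∀ a, a ≠ d s → π s a = 0 := fun a ha => (hoff s a ha).antisymm (hπ.1 s a)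
  have hsum := hπ.2 s
  rw [Finset.sum_eq_single (d s) (fun a _ => hzero a) (by simp)] at hsum
  by_cases h : a = d s
  · simp [detPol, h, hsum]
  · simp [detPol, h, hzero a h]

end Occupancy

section Advantage

variable {M : MDP S A} {π : S → A → ℝ} {R : EuclideanSpace ℝ (S × A)} {V : S → ℝ}

/-- `Q(s,a) - V(s)` for an arbitrary estimate `V`; it is the advantage over `d` when `V` solves
the Bellman equation of `d`, i.e. when `advantage M R V s (d s) = 0` for all `s`. -/
def advantage (M : MDP S A) (R : EuclideanSpace ℝ (S × A)) (V : S → ℝ) (s : S) (a : A) : ℝ :=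
  R (s, a) + M.γ * ∑ s', M.P s a s' * V s' - V s

theorem exists_advantage_eq_zero (M : MDP S A) (R : EuclideanSpace ℝ (S × A)) (d : S → A) :
    ∃ V : S → ℝ, ∀ s, advantage M R V s (d s) = 0 := by
  obtain ⟨V, hV⟩ := exists_eq_add_smul_mulVec (Q := Matrix.of fun s s' => M.P s (d s) s')
    (fun s s' => M.P_nonneg s (d s) s') (fun s => (M.P_sum s (d s)).le)
    (abs_lt.2 ⟨by linarith [M.γ_nonneg], M.γ_lt_one⟩) (fun s => R (s, d s))
  refine ⟨V, fun s => ?_⟩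
  have := congrFun hV s
  simp only [Pi.add_apply, Pi.smul_apply, smul_eq_mul, mulVec, dotProduct, of_apply] at this
  simp only [advantage]
  linarith

theorem scoreE_eq_sum_occ_mul_advantage (hπ : isPolicy π) (R : EuclideanSpace ℝ (S × A))
    (V : S → ℝ) : scoreE M π R
      = ∑ s, ∑ a, occ M π s a * advantage M R V s a + (1 - M.γ) * ∑ s, M.σ s * V s := by
  have hreward : ∑ s, ∑ a, occ M π s a * R (s, a) = scoreE M π R := by
    rw [scoreE, Fintype.sum_prod_type]
  have hvalue : ∑ s, ∑ a, occ M π s a * V s = ∑ s, stateOcc M π s * V s := by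
    exact Finset.sum_congr rfl fun s _ => by rw [← Finset.sum_mul, sum_occ hπ]
  have hnext : ∑ s, ∑ a, occ M π s a * (M.γ * ∑ s', M.P s a s' * V s')
      = ∑ s', (stateOcc M π s' - (1 - M.γ) * M.σ s') * V s' := by
    simp only [stateOcc_eq hπ, add_sub_cancel_left, Finset.mul_sum, Finset.sum_mul]
    conv_rhs => rw [Finset.sum_comm]
    refine Finset.sum_congr rfl fun s _ => ?_
    conv_rhs => rw [Finset.sum_comm]
    exact Finset.sum_congr rfl fun a _ => Finset.sum_congr rfl fun s' _ => by ring
  simp only [advantage, mul_sub, mul_add, Finset.sum_add_distrib, Finset.sum_sub_distrib,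
    hreward, hvalue, hnext, sub_mul, mul_assoc, ← Finset.mul_sum]
  ring

theorem sum_occ_detPol_mul [DecidableEq A] (d : S → A) (f : S → A → ℝ) :
    ∑ s, ∑ a, occ M (detPol d) s a * f s a = ∑ s, stateOcc M (detPol d) s * f s (d s) := by
  simp [occ_eq_stateOcc_mul, detPol]

theorem scoreE_eq_scoreE_detPol_add [DecidableEq A] {d : S → A}
    (hV : ∀ s, advantage M R V s (d s) = 0) (hπ : isPolicy π) :
    scoreE M π R = scoreE M (detPol d) R + ∑ s, ∑ a, occ M π s a * advantage M R V s a := by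
  rw [scoreE_eq_sum_occ_mul_advantage hπ R V,
    scoreE_eq_sum_occ_mul_advantage (isPolicy_detPol d) R V, sum_occ_detPol_mul]
  simp [hV]
  ring

theorem scoreE_detPol_neighbor [DecidableEq S] [DecidableEq A] {d : S → A}
    (hV : ∀ s, advantage M R V s (d s) = 0) (s : S) (a : A) :
    scoreE M (detPol (neighbor d s a)) R
      = scoreE M (detPol d) R + stateOcc M (detPol (neighbor d s a)) s * advantage M R V s a := by
  rw [scoreE_eq_scoreE_detPol_add hV (isPolicy_detPol _), sum_occ_detPol_mul,
    Finset.sum_eq_single s (fun s' _ hs' => by simp [neighbor, hs', hV]) (by simp)]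
  simp [neighbor]

end Advantage

theorem continuous_scoreE (M : MDP S A) (π : S → A → ℝ) : Continuous (scoreE M π) := by
  unfold scoreE
  fun_prop

section Attack

variable [DecidableEq S] [DecidableEq A] {M : MDP S A} {d : S → A} {ε ε' : ℝ}
  {R : EuclideanSpace ℝ (S × A)}

theorem inC.mono (hR : inC M d ε' R) (hε : ε ≤ ε') : inC M d ε R :=
  fun s a ha => (hR s a ha).trans' (by linarith)

theorem inC_mem_nhds (hR : inC M d ε' R) (hε : ε < ε') : {X | inC M d ε X} ∈ 𝓝 R := by
  have hmargin : ∀ s a, a ≠ d s → ∀ᶠ X in 𝓝 R,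
      ε < scoreE M (detPol d) X - scoreE M (detPol (neighbor d s a)) X := fun s a ha =>
    (((continuous_scoreE M _).sub (continuous_scoreE M _)).tendsto R).eventually_const_lt
      (by simp only [Pi.sub_apply]; linarith [hR s a ha])
  filter_upwards [eventually_all.2 fun s => eventually_all.2 fun a =>
    eventually_imp_distrib_left.2 (hmargin s a)] with X hX s a ha
  linarith [hX s a ha]

theorem advantage_neg_of_inC (herg : ∀ π : S → A → ℝ, isPolicy π → ∀ s, 0 < stateOcc M π s)
    (hε : 0 < ε) (hR : inC M d ε R) {V : S → ℝ} (hV : ∀ s, advantage M R V s (d s) = 0)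
    {s : S} {a : A} (ha : a ≠ d s) : advantage M R V s a < 0 := by
  have hgap := hR s a ha
  rw [scoreE_detPol_neighbor hV] at hgap
  have hpos := herg _ (isPolicy_detPol (neighbor d s a)) s
  nlinarith

theorem scoreE_lt_scoreE_detPol_of_inC
    (herg : ∀ π : S → A → ℝ, isPolicy π → ∀ s, 0 < stateOcc M π s) (hε : 0 < ε)
    (hR : inC M d ε R) {π : S → A → ℝ} (hπ : isPolicy π) (hne : π ≠ detPol d) :
    scoreE M π R < scoreE M (detPol d) R := by
  obtain ⟨V, hV⟩ := exists_advantage_eq_zero M R d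
  obtain ⟨s₀, a₀, ha₀, hπ₀⟩ := exists_pos_of_ne_detPol hπ hne
  have hterm : ∀ s a, occ M π s a * advantage M R V s a ≤ 0 := fun s a => by
    by_cases ha : a = d s
    · simp [ha, hV]
    · exact mul_nonpos_of_nonneg_of_nonpos (occ_nonneg hπ s a)
        (advantage_neg_of_inC herg hε hR hV ha).le
  have hterm₀ : occ M π s₀ a₀ * advantage M R V s₀ a₀ < 0 :=
    mul_neg_of_pos_of_neg (by rw [occ_eq_stateOcc_mul]; exact mul_pos (herg π hπ s₀) hπ₀)
      (advantage_neg_of_inC herg hε hR hV ha₀)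
  have hsum : ∑ s, ∑ a, occ M π s a * advantage M R V s a < 0 := by
    rw [← Fintype.sum_prod_type']
    exact Finset.sum_neg' (fun p _ => hterm p.1 p.2) ⟨(s₀, a₀), Finset.mem_univ _, hterm₀⟩
  rw [scoreE_eq_scoreE_detPol_add hV hπ]
  linarith

end Attack

/-- if ε† > ε_D > 0 and R̂ = A(R̄, π†, ε†), then the set of plausible true
rewards `{R : R̂ = A(R, π†, ε) for some 0 < ε ≤ ε_D}` is just `{R̂}`, and the robust
defense degenerates to the target policy: π† is the unique maximizer of ρ̂. -/
theorem underestimate_degenerates [DecidableEq S] [DecidableEq A]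
    (M : MDP S A) (πt : S → A) (εt εD : ℝ) (hεD : 0 < εD) (hlt : εD < εt)
    (herg : ∀ π : S → A → ℝ, isPolicy π → ∀ s, 0 < stateOcc M π s)
    (Rbar Rhat : EuclideanSpace ℝ (S × A))
    (hatt : isAttack M πt εt Rbar Rhat) :
    {R : EuclideanSpace ℝ (S × A) | ∃ ε, 0 < ε ∧ ε ≤ εD ∧ isAttack M πt ε R Rhat}
        = {Rhat} ∧
    ∀ π : S → A → ℝ, isPolicy π → π ≠ detPol πt →
      scoreE M π Rhat < scoreE M (detPol πt) Rhat := by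
  refine ⟨Set.eq_singleton_iff_unique_mem.2 ⟨?_, ?_⟩, fun π hπ hne =>
    scoreE_lt_scoreE_detPol_of_inC herg (hεD.trans hlt) hatt.1 hπ hne⟩
  · exact ⟨εD, hεD, le_rfl, hatt.1.mono hlt.le, fun R₂ _ => by simp⟩
  · rintro R ⟨ε, -, hε, -, hnearest⟩
    exact (eq_of_mem_interior_of_forall_norm_sub_le
      (mem_interior_iff_mem_nhds.2 (inC_mem_nhds hatt.1 (hε.trans_lt hlt))) hnearest).symm
end
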